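/- arXiv:2510.07577 — 7 statements merged into one kernel-verified Lean document; each statement's English description precedes it below -/
import Mathlib

section
/- Let ℓ, m, n be nonnegative integers with ℓ + m < n. Then (1/n) · Σ_{j=1}^{n} (ζ^{2j}+1)^{2ℓ}(ζ^{2j}-1)^{2m} / ζ^{2j(ℓ+m)} equals the coefficient of x^{ℓ+m} in the Maclaurin series of (1-4x)^{m-1/2}, where ζ is a primitive 2n-th root of unity in ℂ. -/
/-!
Put `ω = ζ²`, a primitive `n`-th root of unity. The summand is `P(ωʲ) / ω^{j(ℓ+m)}` for
`P = (X+1)^{2ℓ} (X-1)^{2m}`, so averaging over `j` keeps exactly the coefficients of `P` in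
degrees `≡ ℓ+m (mod n)`; as `deg P = 2(ℓ+m) < (ℓ+m) + n`, only the middle coefficient survives.
Since `(X-1)² = (X+1)² - 4X`, the middle coefficients `c(ℓ,m)` satisfy
`c(ℓ,m+1) = c(ℓ+1,m) - 4 c(ℓ,m)`, which is Pascal's rule for `(-4)^{ℓ+m} (m-1/2 choose ℓ+m)`;
for `m = 0` both sides are the central binomial coefficient.
-/

open Finset Polynomial

section Choose

variable {K : Type*} [Field K] [CharZero K]

theorem Ring.choose_eq_prod_range_div (r : K) (k : ℕ) :
    Ring.choose r k = (∏ j ∈ range k, (r - j)) / k.factorial := by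
  rw [Ring.choose_eq_smul, smul_eq_mul, ← aeval_eq_smeval, ← descPochhammer_eval_eq_prod_range,
    ← descPochhammer_map (Int.castRingHom K), eval_map, inv_mul_eq_div]
  rfl

theorem Ring.succ_mul_choose_succ (r : K) (k : ℕ) :
    (k + 1) * Ring.choose r (k + 1) = (r - k) * Ring.choose r k := by
  rw [Ring.choose_eq_prod_range_div, Ring.choose_eq_prod_range_div, prod_range_succ,
    Nat.factorial_succ]
  push_cast
  field_simp

theorem Ring.neg_four_pow_mul_choose_neg_half (k : ℕ) :
    (-4 : K) ^ k * Ring.choose (-1 / 2 : K) k = k.centralBinom := by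
  induction k with
  | zero => simp
  | succ k ih =>
    have hk : (k + 1 : K) ≠ 0 := by exact_mod_cast k.succ_ne_zero
    apply mul_left_cancel₀ hk
    have hrec : ((k + 1) * (k + 1).centralBinom : K) = 2 * (2 * k + 1) * k.centralBinom := by
      exact_mod_cast Nat.succ_mul_centralBinom_succ k
    rw [hrec, ← ih]
    linear_combination (-4 : K) ^ (k + 1) * Ring.succ_mul_choose_succ (-1 / 2 : K) k

end Choose

theorem coeff_X_add_one_pow_mul_X_sub_one_pow {K : Type*} [Field K] [CharZero K] (ℓ m : ℕ) :
    ((X + 1) ^ (2 * ℓ) * (X - 1) ^ (2 * m) : K[X]).coeff (ℓ + m) =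
      (-4) ^ (ℓ + m) * Ring.choose ((m : K) - 1 / 2) (ℓ + m) := by
  induction m generalizing ℓ with
  | zero =>
    simp [coeff_X_add_one_pow, ← Nat.centralBinom_eq_two_mul_choose,
      ← Ring.neg_four_pow_mul_choose_neg_half, neg_div]
  | succ m ih =>
    have hrec : ((X + 1) ^ (2 * ℓ) * (X - 1) ^ (2 * (m + 1)) : K[X]).coeff (ℓ + m + 1) =
        ((X + 1) ^ (2 * (ℓ + 1)) * (X - 1) ^ (2 * m) : K[X]).coeff (ℓ + 1 + m) -
          4 * ((X + 1) ^ (2 * ℓ) * (X - 1) ^ (2 * m) : K[X]).coeff (ℓ + m) := by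
      rw [show ((X + 1) ^ (2 * ℓ) * (X - 1) ^ (2 * (m + 1)) : K[X]) =
          (X + 1) ^ (2 * (ℓ + 1)) * (X - 1) ^ (2 * m) -
            C 4 * (X * ((X + 1) ^ (2 * ℓ) * (X - 1) ^ (2 * m))) by
          rw [C_ofNat]; ring,
        coeff_sub, coeff_C_mul, coeff_X_mul, add_right_comm]
    rw [← add_assoc, hrec, ih, ih, add_right_comm, Nat.cast_succ,
      show (m + 1 : K) - 1 / 2 = (m - 1 / 2) + 1 by ring, Ring.choose_succ_succ]
    ring

theorem IsPrimitiveRoot.sum_Icc_pow_pow {K : Type*} [Field K] {ω : K} {n : ℕ}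
    (hω : IsPrimitiveRoot ω n) (a : ℕ) :
    ∑ j ∈ Icc 1 n, (ω ^ a) ^ j = if n ∣ a then (n : K) else 0 := by
  split_ifs with hdvd
  · simp [(hω.pow_eq_one_iff_dvd a).2 hdvd]
  · have hx : ω ^ a ≠ 1 := mt (hω.pow_eq_one_iff_dvd a).1 hdvd
    have hxn : (ω ^ a) ^ n = 1 := by rw [← pow_mul, mul_comm, pow_mul, hω.pow_eq_one, one_pow]
    rw [← Ico_add_one_right_eq_Icc, sum_Ico_eq_sum_range, Nat.add_sub_cancel]
    simp_rw [pow_add, pow_one, ← mul_sum, geom_sum_eq hx, hxn, sub_self, zero_div, mul_zero]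

theorem IsPrimitiveRoot.sum_eval_pow_div_pow_eq_mul_coeff {K : Type*} [Field K] {ω : K} {n N : ℕ}
    (hω : IsPrimitiveRoot ω n) (hN : N < n) {p : K[X]} (hp : p.natDegree < N + n) :
    ∑ j ∈ Icc 1 n, p.eval (ω ^ j) / ω ^ (j * N) = n * p.coeff N := by
  obtain ⟨k, rfl⟩ := Nat.exists_eq_add_of_le hN.le
  have hω0 : ω ≠ 0 := hω.ne_zero (by omega)
  -- `ω ^ (N + k) = 1` turns division by `ω ^ (j * N)` into multiplication by `ω ^ (j * k)`.
  have hterm (j : ℕ) : p.eval (ω ^ j) / ω ^ (j * N) =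
      ∑ i ∈ range (N + (N + k)), p.coeff i * (ω ^ (i + k)) ^ j := by
    rw [eval_eq_sum_range' hp, sum_div]
    refine sum_congr rfl fun i _ => ?_
    rw [div_eq_iff (pow_ne_zero _ hω0), mul_assoc, ← pow_mul, ← pow_mul, ← pow_add,
      show (i + k) * j + j * N = j * i + (N + k) * j by ring, pow_add, pow_mul ω (N + k),
      hω.pow_eq_one, one_pow, mul_one]
  have hfilter {i : ℕ} (hi : i < N + (N + k)) : N + k ∣ i + k ↔ i = N := by
    constructor
    · rintro ⟨c, hc⟩
      rcases c with _ | _ | c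
      · omega
      · omega
      · have : (N + k) * (c + 1 + 1) = (N + k) * c + 2 * (N + k) := by ring
        omega
    · rintro rfl
      exact ⟨1, by ring⟩
  rw [sum_congr rfl fun j _ => hterm j, sum_comm]
  simp_rw [← mul_sum, hω.sum_Icc_pow_pow]
  rw [sum_eq_single_of_mem N (mem_range.2 (by omega)), if_pos dvd_rfl, mul_comm]
  intro i hi hne
  rw [if_neg (mt (hfilter (mem_range.1 hi)).1 hne), mul_zero]

/-- For `ℓ + m < n` and `ζ` a primitive `2n`-th root of unity in `ℂ`,
`(1/n) ∑_{j=1}^{n} (ζ^{2j}+1)^{2ℓ} (ζ^{2j}-1)^{2m} / ζ^{2j(ℓ+m)}` equals the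
coefficient of `x^(ℓ+m)` in the Maclaurin expansion of `(1-4x)^(m-1/2)`, i.e.
`(-4)^(ℓ+m) (m-1/2)(m-3/2)⋯(m-1/2-(ℓ+m-1)) / (ℓ+m)!`. -/
theorem stmt4 (n ℓ m : ℕ) (h : ℓ + m < n) (ζ : ℂ)
    (hζ : IsPrimitiveRoot ζ (2 * n)) :
    (1 / (n : ℂ)) * ∑ j ∈ Finset.Icc 1 n,
        (ζ ^ (2 * j) + 1) ^ (2 * ℓ) * (ζ ^ (2 * j) - 1) ^ (2 * m) /
          ζ ^ (2 * j * (ℓ + m)) =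
      (-4 : ℂ) ^ (ℓ + m) *
        (∏ k ∈ Finset.range (ℓ + m), ((m : ℂ) - 1 / 2 - (k : ℂ))) /
        (Nat.factorial (ℓ + m) : ℂ) := by
  have hω : IsPrimitiveRoot (ζ ^ 2) n := hζ.pow (by omega) rfl
  have hdeg : ((X + 1) ^ (2 * ℓ) * (X - 1) ^ (2 * m) : ℂ[X]).natDegree < ℓ + m + n := by
    have : ((X + 1) ^ (2 * ℓ) * (X - 1) ^ (2 * m) : ℂ[X]).natDegree ≤ 2 * ℓ + 2 * m := by
      compute_degree
    omega
  have hsummand (j : ℕ) :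
      (ζ ^ (2 * j) + 1) ^ (2 * ℓ) * (ζ ^ (2 * j) - 1) ^ (2 * m) / ζ ^ (2 * j * (ℓ + m)) =
        ((X + 1) ^ (2 * ℓ) * (X - 1) ^ (2 * m) : ℂ[X]).eval ((ζ ^ 2) ^ j) /
          (ζ ^ 2) ^ (j * (ℓ + m)) := by
    simp only [eval_mul, eval_pow, eval_add, eval_sub, eval_X, eval_one, ← pow_mul, mul_assoc]
  have hn : (n : ℂ) ≠ 0 := by exact_mod_cast (show n ≠ 0 by omega)
  rw [sum_congr rfl fun j _ => hsummand j, hω.sum_eval_pow_div_pow_eq_mul_coeff h hdeg, one_div,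
    inv_mul_cancel_left₀ hn, coeff_X_add_one_pow_mul_X_sub_one_pow,
    Ring.choose_eq_prod_range_div, mul_div_assoc]
end

section
/- For nonnegative integers ℓ ≤ m, the coefficient of x^{ℓ+m} in the polynomial (x+1)^{2ℓ}(x-1)^{2m}, namely Σ_{i=0}^{ℓ+m} (-1)^i C(2ℓ, ℓ+m-i) C(2m, i), equals (-1)^m (2ℓ)! (m-ℓ)! C(2m, ℓ+m) / (ℓ! · m!). -/
/-!
Write `S ℓ m` for the sum. Zeilberger's algorithm finds the recurrence
`(ℓ + m + 1) S (ℓ+1) m = 2 (2ℓ + 1) S ℓ m`: the corresponding combination of summands at index `i`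
is the difference `G i - G (i+1)` of `G j = (-1)^j j C(2ℓ+1, ℓ+m+1-j) C(2m, j)`, so the sum
telescopes. Together with `S 0 m = (-1)^m C(2m, m)` this gives
`S ℓ m = (-1)^m (2ℓ)! (2m)! / (ℓ! m! (ℓ+m)!)`, which for `ℓ ≤ m` is the stated right-hand side.
-/

open Finset
open scoped Nat

section ChooseCast

variable {R : Type*} [CommRing R]

theorem cast_add_one_mul_choose_succ_succ (n k : ℕ) :
    ((k : R) + 1) * ((n + 1).choose (k + 1) : R) = ((n : R) + 1) * (n.choose k : R) := by
  have := congrArg (Nat.cast : ℕ → R) (Nat.add_one_mul_choose_eq n k)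
  push_cast at this
  linear_combination -this

theorem cast_add_one_mul_choose_succ_right (n i : ℕ) :
    ((i : R) + 1) * (n.choose (i + 1) : R) = ((n : R) - i) * (n.choose i : R) := by
  rcases le_or_gt i n with hin | hni
  · have := congrArg (Nat.cast : ℕ → R) (Nat.choose_succ_right_eq n i)
    push_cast [Nat.cast_sub hin] at this
    linear_combination this
  · simp [Nat.choose_eq_zero_of_lt hni, Nat.choose_eq_zero_of_lt (Nat.lt_succ_of_lt hni)]

theorem cast_sub_mul_choose_succ_left (n k : ℕ) :
    ((n : R) + 1 - k) * ((n + 1).choose k : R) = ((n : R) + 1) * (n.choose k : R) := by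
  rcases le_or_gt k (n + 1) with hkn | hnk
  · have := congrArg (Nat.cast : ℕ → R) (Nat.choose_mul_succ_eq n k)
    push_cast [Nat.cast_sub hkn] at this
    linear_combination -this
  · simp [Nat.choose_eq_zero_of_lt hnk, Nat.choose_eq_zero_of_lt (Nat.lt_of_succ_lt hnk)]

-- The summand identity behind the telescoping, at `n = 2ℓ`, `M = 2m`, `k = ℓ + m - i`, with the
-- sign `(-1)^i` divided out.
theorem choose_middle_certificate {n M i k : ℕ} (hnM : n + M = 2 * (i + k)) :
    ((i : R) + k + 1) * ((n + 2).choose (k + 1) : R) * (M.choose i : R)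
        - 2 * ((n : R) + 1) * (n.choose k : R) * (M.choose i : R) =
      ((i : R) + 1) * ((n + 1).choose k : R) * (M.choose (i + 1) : R)
        + (i : R) * ((n + 1).choose (k + 1) : R) * (M.choose i : R) := by
  have hM : (M : R) = 2 * ((i : R) + k) - n := by
    have := congrArg (Nat.cast : ℕ → R) hnM
    push_cast at this
    linear_combination this
  have pascal :
      ((n + 2).choose (k + 1) : R) = ((n + 1).choose (k + 1) : R) + ((n + 1).choose k : R) := by
    rw [Nat.choose_succ_succ', Nat.cast_add, add_comm]
  have hM' := cast_add_one_mul_choose_succ_right (R := R) M i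
  rw [hM] at hM'
  linear_combination (M.choose i : R) * (((i : R) + k + 1) * pascal
    + cast_add_one_mul_choose_succ_succ (R := R) n k + cast_sub_mul_choose_succ_left (R := R) n k)
    - ((n + 1).choose k : R) * hM'

end ChooseCast

/-- The coefficient of `x^(ℓ+m)` in `(x+1)^(2ℓ) (x-1)^(2m)`. The sum must stop at `ℓ + m`:
beyond it the truncated subtraction `ℓ + m - i` is `0`, not negative. -/
def middleCoeff (ℓ m : ℕ) : ℚ :=
  ∑ i ∈ range (ℓ + m + 1), (-1 : ℚ) ^ i * ((2 * ℓ).choose (ℓ + m - i) : ℚ) * ((2 * m).choose i : ℚ)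

theorem middleCoeff_zero_left (m : ℕ) :
    middleCoeff 0 m = (-1 : ℚ) ^ m * ((2 * m).choose m : ℚ) := by
  rw [middleCoeff, sum_eq_single_of_mem m (by simp)]
  · simp
  · intro i hi him
    have : m - i ≠ 0 := by simp at hi; omega
    simp [Nat.choose_eq_zero_of_lt (Nat.pos_of_ne_zero this)]

theorem middleCoeff_succ_left (ℓ m : ℕ) :
    ((ℓ : ℚ) + m + 1) * middleCoeff (ℓ + 1) m = 2 * (2 * (ℓ : ℚ) + 1) * middleCoeff ℓ m := by
  set G : ℕ → ℚ := fun j =>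
    (-1 : ℚ) ^ j * j * ((2 * ℓ + 1).choose (ℓ + m + 1 - j) : ℚ) * ((2 * m).choose j : ℚ)
  have step : ∀ i ∈ range (ℓ + m + 1),
      ((ℓ : ℚ) + m + 1) * ((-1 : ℚ) ^ i * ((2 * (ℓ + 1)).choose (ℓ + 1 + m - i) : ℚ)
          * ((2 * m).choose i : ℚ))
        - 2 * (2 * (ℓ : ℚ) + 1) * ((-1 : ℚ) ^ i * ((2 * ℓ).choose (ℓ + m - i) : ℚ)
          * ((2 * m).choose i : ℚ))
      = G i - G (i + 1) := by
    intro i hi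
    obtain ⟨k, hk⟩ : ∃ k, ℓ + m = i + k := ⟨ℓ + m - i, by simp at hi; omega⟩
    have cert := choose_middle_certificate (R := ℚ) (n := 2 * ℓ) (M := 2 * m) (i := i) (k := k)
      (by omega)
    have hlm : (ℓ : ℚ) + m = i + k := by exact_mod_cast hk
    simp only [G, show 2 * (ℓ + 1) = 2 * ℓ + 2 by ring, show ℓ + 1 + m - i = k + 1 by omega,
      show ℓ + m - i = k by omega, show ℓ + m + 1 - i = k + 1 by omega,
      show ℓ + m + 1 - (i + 1) = k by omega]
    rw [hlm, pow_succ]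
    push_cast at cert ⊢
    linear_combination (-1 : ℚ) ^ i * cert
  have htel := sum_range_sub' G (ℓ + m + 1)
  rw [← sum_congr rfl step, sum_sub_distrib, ← mul_sum, ← mul_sum] at htel
  rw [middleCoeff, middleCoeff, show ℓ + 1 + m + 1 = ℓ + m + 1 + 1 by ring, sum_range_succ]
  simp only [G, show ℓ + 1 + m - (ℓ + m + 1) = 0 by omega, Nat.sub_self, Nat.choose_zero_right,
    CharP.cast_eq_zero] at htel ⊢
  push_cast at htel ⊢
  linear_combination htel

theorem middleCoeff_eq (ℓ m : ℕ) :
    middleCoeff ℓ m = (-1 : ℚ) ^ m * (2 * ℓ)! * (2 * m)! / (ℓ ! * m ! * (ℓ + m)!) := by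
  induction ℓ with
  | zero =>
    rw [middleCoeff_zero_left, two_mul, Nat.cast_add_choose]
    simp [mul_div_assoc]
  | succ ℓ ih =>
    have hpos : (ℓ : ℚ) + m + 1 ≠ 0 := by positivity
    have hrec := middleCoeff_succ_left ℓ m
    rw [ih] at hrec
    rw [← mul_right_inj' hpos, hrec, show 2 * (ℓ + 1) = 2 * ℓ + 1 + 1 by ring,
      show ℓ + 1 + m = ℓ + m + 1 by ring]
    push_cast [Nat.factorial_succ]
    field_simp
    ring

/-- For `ℓ ≤ m`, the coefficient of `x^(ℓ+m)` in `(x+1)^(2ℓ) (x-1)^(2m)`: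
`∑_{i=0}^{ℓ+m} (-1)^i C(2ℓ, ℓ+m-i) C(2m, i)
  = (-1)^m (2ℓ)! (m-ℓ)! C(2m, ℓ+m) / (ℓ! m!)`. -/
theorem stmt5 (ℓ m : ℕ) (h : ℓ ≤ m) :
    ∑ i ∈ Finset.range (ℓ + m + 1),
        ((-1 : ℚ) ^ i * (Nat.choose (2 * ℓ) (ℓ + m - i) : ℚ) *
          (Nat.choose (2 * m) i : ℚ)) =
      (-1 : ℚ) ^ m * (Nat.factorial (2 * ℓ) : ℚ) * (Nat.factorial (m - ℓ) : ℚ) *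
        (Nat.choose (2 * m) (ℓ + m) : ℚ) /
        ((Nat.factorial ℓ : ℚ) * (Nat.factorial m : ℚ)) := by
  have hfac : (2 * m).choose (ℓ + m) * (ℓ + m)! * (m - ℓ)! = (2 * m)! := by
    rw [← Nat.choose_mul_factorial_mul_factorial (show ℓ + m ≤ 2 * m by omega),
      show 2 * m - (ℓ + m) = m - ℓ by omega]
  change middleCoeff ℓ m = _
  rw [middleCoeff_eq, ← hfac]
  push_cast
  field_simp
end

section
/- For all integers n ≥ 0 and j ≥ 0, 4^n · Σ_{i=j}^{n} C(2i,i) C(i,j) / 4^i = ((2n+1)/(2j+1)) · C(n,j) · C(2n,n). -/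
open Finset

/-!
Both sides, as functions of `n ≥ j`, satisfy `S (n + 1) = 4 S n + C(2n+2, n+1) C(n+1, j)` and
agree at `n = j`; for `n < j` both vanish. For the right-hand side the recurrence comes from
`(n+1) C(2n+2, n+1) = 2(2n+1) C(2n, n)` and `(n+1) C(n, j) = (n+1-j) C(n+1, j)`.
-/

theorem Nat.four_mul_choose_mul_choose_two_mul (n j : ℕ) :
    4 * (2 * n + 1) * n.choose j * (2 * n).choose n =
      2 * (n + 1 - j) * (n + 1).choose j * (2 * (n + 1)).choose (n + 1) := by
  have hc := Nat.succ_mul_centralBinom_succ n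
  simp only [Nat.centralBinom_eq_two_mul_choose] at hc
  calc 4 * (2 * n + 1) * n.choose j * (2 * n).choose n
      = 2 * n.choose j * (2 * (2 * n + 1) * (2 * n).choose n) := by ring
    _ = 2 * (n.choose j * (n + 1)) * (2 * (n + 1)).choose (n + 1) := by rw [← hc]; ring
    _ = _ := by rw [Nat.choose_mul_succ_eq]; ring

theorem pow_succ_mul_sum_Icc_div_pow {K : Type*} [Field K] {x : K} (hx : x ≠ 0)
    (a : ℕ → K) {j n : ℕ} (hj : j ≤ n + 1) :
    x ^ (n + 1) * ∑ i ∈ Icc j (n + 1), a i / x ^ i =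
      x * (x ^ n * ∑ i ∈ Icc j n, a i / x ^ i) + a (n + 1) := by
  rw [sum_Icc_succ_top hj, mul_add, mul_div_cancel₀ _ (pow_ne_zero _ hx), pow_succ', mul_assoc]

theorem two_mul_succ_add_one_div_mul_choose_mul_choose {K : Type*} [Field K] [CharZero K]
    {j n : ℕ} (hj : j ≤ n + 1) :
    (2 * ((n + 1 : ℕ) : K) + 1) / (2 * j + 1) * ((n + 1).choose j : K) *
        ((2 * (n + 1)).choose (n + 1) : K) =
      4 * ((2 * n + 1) / (2 * j + 1) * (n.choose j : K) * ((2 * n).choose n : K)) +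
        ((2 * (n + 1)).choose (n + 1) : K) * ((n + 1).choose j : K) := by
  have key : (4 * (2 * n + 1) * n.choose j * (2 * n).choose n : K) =
      2 * ((n + 1 - j : ℕ) : K) * (n + 1).choose j * (2 * (n + 1)).choose (n + 1) := by
    exact_mod_cast Nat.four_mul_choose_mul_choose_two_mul n j
  push_cast [Nat.cast_sub hj] at key ⊢
  have h2j : (2 * j + 1 : K) ≠ 0 := by exact_mod_cast (2 * j).succ_ne_zero
  field_simp
  linear_combination -key

/-- `4^n ∑_{i=j}^{n} C(2i,i) C(i,j) / 4^i = ((2n+1)/(2j+1)) C(n,j) C(2n,n)`. -/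
theorem stmt6 (n j : ℕ) :
    (4 : ℚ) ^ n * ∑ i ∈ Finset.Icc j n,
        (Nat.choose (2 * i) i : ℚ) * (Nat.choose i j : ℚ) / 4 ^ i =
      ((2 * n + 1 : ℚ) / (2 * j + 1 : ℚ)) * (Nat.choose n j : ℚ) *
        (Nat.choose (2 * n) n : ℚ) := by
  rcases lt_or_ge n j with hnj | hjn
  · simp [Icc_eq_empty_of_lt hnj, Nat.choose_eq_zero_of_lt hnj]
  induction n, hjn using Nat.le_induction with
  | base =>
    have h2j : (2 * j + 1 : ℚ) ≠ 0 := by positivity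
    simp [div_self h2j, mul_div_cancel₀]
  | succ n hjn ih =>
    rw [pow_succ_mul_sum_Icc_div_pow four_ne_zero _ (by omega), ih,
      two_mul_succ_add_one_div_mul_choose_mul_choose (by omega)]
end

section
/- In SL₂ over a commutative ring, the Fricke trace identity holds: for any A, B ∈ SL₂(R), (tr A)² + (tr B)² + (tr AB)² = (tr A)(tr B)(tr AB) + tr(ABA^{-1}B^{-1}) + 2. -/
open Matrix

/-! In `SL₂` the inverse is the adjugate and all determinants are `1`, so the Fricke identity is
the specialisation of a polynomial identity valid for all `2 × 2` matrices, in which the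
determinants restore homogeneity (every term has degree two in `A` and two in `B`). -/

theorem Matrix.trace_sq_mul_det_add_trace_sq_mul_det_add_trace_mul_sq {R : Type*} [CommRing R]
    (A B : Matrix (Fin 2) (Fin 2) R) :
    trace A ^ 2 * det B + trace B ^ 2 * det A + trace (A * B) ^ 2 =
      trace A * trace B * trace (A * B) + trace (A * B * adjugate A * adjugate B) +
        2 * det A * det B := by
  simp only [trace_fin_two, det_fin_two, adjugate_fin_two, mul_apply, Fin.sum_univ_two, of_apply,
    cons_val', cons_val_zero, cons_val_one, empty_val', cons_val_fin_one]
  ring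

/-- The Fricke trace identity in `SL₂(R)`:
`(tr A)² + (tr B)² + (tr AB)² = (tr A)(tr B)(tr AB) + tr [A,B] + 2`. -/
theorem stmt13 (R : Type*) [CommRing R]
    (A B : Matrix.SpecialLinearGroup (Fin 2) R) :
    (Matrix.trace (A : Matrix (Fin 2) (Fin 2) R)) ^ 2 +
      (Matrix.trace (B : Matrix (Fin 2) (Fin 2) R)) ^ 2 +
      (Matrix.trace ((A * B : Matrix.SpecialLinearGroup (Fin 2) R) :
        Matrix (Fin 2) (Fin 2) R)) ^ 2 =
    Matrix.trace (A : Matrix (Fin 2) (Fin 2) R) *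
      Matrix.trace (B : Matrix (Fin 2) (Fin 2) R) *
      Matrix.trace ((A * B : Matrix.SpecialLinearGroup (Fin 2) R) :
        Matrix (Fin 2) (Fin 2) R) +
    Matrix.trace ((A * B * A⁻¹ * B⁻¹ : Matrix.SpecialLinearGroup (Fin 2) R) :
      Matrix (Fin 2) (Fin 2) R) + 2 := by
  have h := trace_sq_mul_det_add_trace_sq_mul_det_add_trace_mul_sq (A : Matrix (Fin 2) (Fin 2) R) B
  rw [A.det_coe, B.det_coe] at h
  simpa only [Matrix.SpecialLinearGroup.coe_mul, Matrix.SpecialLinearGroup.coe_inv, mul_one] using h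
end

section
/- Let (x, y, z) ∈ ℝ³ with 0 < κ < 4 satisfy x² + y² + z² = xyz + κ and -√κ < x < √κ. Then x² < 4, (x² - κ)/(x² - 4) > 0, and there exist θ, φ ∈ [0, 2π) with x = 2cos θ, y = 2√((x²-κ)/(x²-4))·cos φ, and z = 2√((x²-κ)/(x²-4))·cos(θ + φ). -/
/-!
Put `x = 2 cos θ` with `θ = arccos (x / 2) ∈ (0, π)`. The Markoff equation then reads
`y² + z² - 2 cos θ · y z = κ - x²`, and since `sin θ ≠ 0` the level sets of this quadratic form
are the ellipses `φ ↦ (r cos φ, r cos (θ + φ))`, on which it takes the value `(r sin θ)²`.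
Solving `(r sin θ)² = κ - x²` gives `r = 2 √((x² - κ) / (x² - 4))`.
-/

open Real

theorem exists_mem_Ico_cos_eq_sin_eq {a b : ℝ} (h : a ^ 2 + b ^ 2 = 1) :
    ∃ φ ∈ Set.Ico 0 (2 * π), cos φ = a ∧ sin φ = b := by
  have hnorm : ‖(⟨a, b⟩ : ℂ)‖ = 1 := by
    rw [Complex.norm_def, Complex.normSq_mk, ← sq, ← sq, h, sqrt_one]
  have hper : Function.Periodic (fun t ↦ (cos t, sin t)) (2 * π) := fun t ↦ by
    simp only [cos_add_two_pi, sin_add_two_pi]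
  obtain ⟨φ, hφ, hcs⟩ := hper.exists_mem_Ico₀ two_pi_pos (Complex.arg ⟨a, b⟩)
  simp only [Prod.mk.injEq] at hcs
  refine ⟨φ, hφ, ?_, ?_⟩
  · simpa [hnorm, hcs.1] using Complex.norm_mul_cos_arg ⟨a, b⟩
  · simpa [hnorm, hcs.2] using Complex.norm_mul_sin_arg ⟨a, b⟩

theorem exists_eq_mul_cos_eq_mul_cos_add {θ r y z : ℝ} (hθ : sin θ ≠ 0) (hr : r ≠ 0)
    (h : y ^ 2 + z ^ 2 - 2 * cos θ * y * z = (r * sin θ) ^ 2) :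
    ∃ φ ∈ Set.Ico 0 (2 * π), y = r * cos φ ∧ z = r * cos (θ + φ) := by
  obtain ⟨φ, hφ, hcos, hsin⟩ :
      ∃ φ ∈ Set.Ico 0 (2 * π), cos φ = y / r ∧ sin φ = (y * cos θ - z) / (r * sin θ) := by
    apply exists_mem_Ico_cos_eq_sin_eq
    field_simp
    linear_combination (sin_sq_add_cos_sq θ) * y ^ 2 + h
  refine ⟨φ, hφ, ?_, ?_⟩
  · rw [hcos]; field_simp
  · rw [cos_add, hcos, hsin]; field_simp; ring

theorem stmt16_general (κ x y z : ℝ) (hκ4 : κ < 4)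
    (hM : x ^ 2 + y ^ 2 + z ^ 2 = x * y * z + κ)
    (hx1 : -Real.sqrt κ < x) (hx2 : x < Real.sqrt κ) :
    x ^ 2 < 4 ∧ 0 < (x ^ 2 - κ) / (x ^ 2 - 4) ∧
      ∃ θ φ : ℝ, θ ∈ Set.Ico 0 (2 * π) ∧ φ ∈ Set.Ico 0 (2 * π) ∧
        x = 2 * Real.cos θ ∧
        y = 2 * Real.sqrt ((x ^ 2 - κ) / (x ^ 2 - 4)) * Real.cos φ ∧
        z = 2 * Real.sqrt ((x ^ 2 - κ) / (x ^ 2 - 4)) * Real.cos (θ + φ) := by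
  have hxκ : x ^ 2 < κ := Real.sq_lt.2 ⟨hx1, hx2⟩
  have hx4 : x ^ 2 < 4 := hxκ.trans hκ4
  have hq : 0 < (x ^ 2 - κ) / (x ^ 2 - 4) := div_pos_of_neg_of_neg (by linarith) (by linarith)
  refine ⟨hx4, hq, ?_⟩
  set θ := arccos (x / 2) with hθ
  have hcos : cos θ = x / 2 := cos_arccos (by nlinarith) (by nlinarith)
  have hsin : 0 < sin θ := by
    rw [hθ, sin_arccos]
    exact sqrt_pos.2 (by nlinarith)
  have hform : y ^ 2 + z ^ 2 - 2 * cos θ * y * z =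
      (2 * √((x ^ 2 - κ) / (x ^ 2 - 4)) * sin θ) ^ 2 := by
    have hq4 : (x ^ 2 - κ) / (x ^ 2 - 4) * (4 - x ^ 2) = κ - x ^ 2 := by
      field_simp [(by linarith : x ^ 2 - 4 ≠ 0)]
      ring
    rw [mul_pow, mul_pow, sq_sqrt hq.le, sin_sq, hcos]
    linear_combination hM - hq4
  obtain ⟨φ, hφ, hy, hz⟩ :=
    exists_eq_mul_cos_eq_mul_cos_add hsin.ne' (by positivity) hform
  refine ⟨θ, φ, ⟨arccos_nonneg _, (arccos_le_pi _).trans_lt ?_⟩, hφ, ?_, hy, hz⟩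
  · linarith [pi_pos]
  · linarith

/-- For `0 < κ < 4` and a real Markoff triple `(x, y, z)` with `-√κ < x < √κ`:
`x² < 4`, `(x² - κ)/(x² - 4) > 0`, and the triple admits the trigonometric
parameterization `x = 2 cos θ`, `y = 2 √((x²-κ)/(x²-4)) cos φ`,
`z = 2 √((x²-κ)/(x²-4)) cos(θ + φ)` for some `θ, φ ∈ [0, 2π)`. -/
theorem stmt16 (κ x y z : ℝ) (hκ0 : 0 < κ) (hκ4 : κ < 4)
    (hM : x ^ 2 + y ^ 2 + z ^ 2 = x * y * z + κ)
    (hx1 : -Real.sqrt κ < x) (hx2 : x < Real.sqrt κ) :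
    x ^ 2 < 4 ∧ 0 < (x ^ 2 - κ) / (x ^ 2 - 4) ∧
      ∃ θ φ : ℝ, θ ∈ Set.Ico 0 (2 * π) ∧ φ ∈ Set.Ico 0 (2 * π) ∧
        x = 2 * Real.cos θ ∧
        y = 2 * Real.sqrt ((x ^ 2 - κ) / (x ^ 2 - 4)) * Real.cos φ ∧
        z = 2 * Real.sqrt ((x ^ 2 - κ) / (x ^ 2 - 4)) * Real.cos (θ + φ) :=
  stmt16_general κ x y z hκ4 hM hx1 hx2
end

section
/- For integers n > m ≥ 0 and real numbers satisfying the formal identity: Σ_{i=m+1}^{n} (-1)^i C(n,i) C(n+i-1, i) = (-1)^{m+1} C(n-1, m) C(n+m, m). -/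
/-! With `n = k + 1` and `f j = (-1)^(j+1) C(k, j) C(k+1+j, j)` the right-hand side, the `i = j + 1`
summand equals `f j - f (j + 1)`, so the sum telescopes to `f m - f n = f m`. After Pascal's rule
the telescoping identity reduces to `C(k, m) C(k+m+1, m+1) = C(k+1, m+1) C(k+m+1, m)`. -/

open Finset

namespace Nat

theorem choose_mul_choose_add_one_eq (k m : ℕ) :
    k.choose m * (k + m + 1).choose (m + 1) = (k + 1).choose (m + 1) * (k + m + 1).choose m := by
  refine Nat.eq_of_mul_eq_mul_right m.succ_pos ?_
  have h := choose_succ_right_eq (k + m + 1) m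
  rw [show k + m + 1 - m = k + 1 by omega] at h
  calc k.choose m * (k + m + 1).choose (m + 1) * (m + 1)
      = (k + 1) * k.choose m * (k + m + 1).choose m := by rw [mul_assoc, h]; ring
    _ = (k + 1).choose (m + 1) * (k + m + 1).choose m * (m + 1) := by
      rw [add_one_mul_choose_eq]; ring

theorem add_one_choose_mul_choose_eq (k m : ℕ) :
    (k + 1).choose (m + 1) * (k + m + 1).choose (m + 1) =
      k.choose m * (k + m + 1).choose m + k.choose (m + 1) * (k + m + 1 + 1).choose (m + 1) := by
  have h := choose_mul_choose_add_one_eq k m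
  rw [choose_succ_succ' k m] at h ⊢
  rw [choose_succ_succ' (k + m + 1)]
  linarith

end Nat

/-- For `n > m ≥ 0`:
`∑_{i=m+1}^{n} (-1)^i C(n,i) C(n+i-1, i) = (-1)^(m+1) C(n-1, m) C(n+m, m)`. -/
theorem stmt17 (n m : ℕ) (h : m < n) :
    ∑ i ∈ Finset.Icc (m + 1) n,
        ((-1 : ℤ) ^ i * (Nat.choose n i : ℤ) * (Nat.choose (n + i - 1) i : ℤ)) =
      (-1 : ℤ) ^ (m + 1) * (Nat.choose (n - 1) m : ℤ) *
        (Nat.choose (n + m) m : ℤ) := by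
  obtain ⟨k, rfl⟩ : ∃ k, n = k + 1 := ⟨n - 1, by omega⟩
  set f : ℕ → ℤ := fun j ↦ (-1) ^ (j + 1) * (k.choose j : ℤ) * ((k + 1 + j).choose j : ℤ) with hf
  have summand_eq : ∀ j, (-1 : ℤ) ^ (j + 1) * ((k + 1).choose (j + 1) : ℤ) *
      ((k + 1 + (j + 1) - 1).choose (j + 1) : ℤ) = -(f (j + 1) - f j) := by
    intro j
    have key := Nat.add_one_choose_mul_choose_eq k j
    zify at key
    rw [show k + 1 + (j + 1) - 1 = k + j + 1 by omega]
    simp only [hf, show k + 1 + j = k + j + 1 by omega,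
      show k + 1 + (j + 1) = k + j + 1 + 1 by omega]
    linear_combination (-1 : ℤ) ^ (j + 1) * key
  have f_top : f (k + 1) = 0 := by simp [hf]
  rw [← Ico_add_one_right_eq_Icc, ← sum_Ico_add', sum_congr rfl fun j _ ↦ summand_eq j,
    sum_neg_distrib, sum_Ico_sub f (by omega), f_top]
  simp [hf]
end

section
/- Let p be an odd prime, j ≥ 0 with j < (p-1)/2, and x ∈ F_p with x ≠ 4 and x ≠ 0. Then, computed in F_p, Σ_{i=j}^{(p-1)/2} C(i,j)(x/4)^i = (x/4)^j/(1 - x/4)^{j+1} · (1 - x^{(p-1)/2} Σ_{i=0}^{j} C((p-1)/2, i)(4/x - 1)^i) + C((p-1)/2, j) x^{(p-1)/2}. -/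
open Finset

lemma aux_rec {R : Type*} [CommRing R] (t : R) (n j : ℕ) :
    (1 - t) * ∑ i ∈ range (n+1), (Nat.choose i (j+1) : R) * t^i
      = t * ∑ i ∈ range (n+1), (Nat.choose i j : R) * t^i
        - (Nat.choose (n+1) (j+1) : R) * t^(n+1) := by
  have h1 : ∑ i ∈ range (n+1), (Nat.choose i (j+1) : R) * t^i
      = t * (∑ i ∈ range n, (Nat.choose i j : R) * t^i)
        + t * (∑ i ∈ range n, (Nat.choose i (j+1) : R) * t^i) := by
    rw [Finset.sum_range_succ']
    simp only [Nat.choose_succ_succ, Nat.cast_add, Nat.choose_zero_succ, Nat.cast_zero,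
      zero_mul, add_zero, Finset.mul_sum, ← Finset.sum_add_distrib]
    exact Finset.sum_congr rfl fun i _ => by ring
  have h2 : (∑ i ∈ range n, (Nat.choose i (j+1) : R) * t^i)
        + (Nat.choose n (j+1) : R) * t^n
      = t * (∑ i ∈ range n, (Nat.choose i j : R) * t^i)
        + t * (∑ i ∈ range n, (Nat.choose i (j+1) : R) * t^i) := by
    rw [← Finset.sum_range_succ]; exact h1
  rw [Finset.sum_range_succ, Finset.sum_range_succ]
  push_cast [Nat.choose_succ_succ n j]
  linear_combination h2

lemma key {R : Type*} [CommRing R] (t : R) (m : ℕ) :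
    ∀ j, j < m →
      (1 - t)^(j+1) * ∑ i ∈ range m, (Nat.choose i j : R) * t^i
        + t^j * ∑ i ∈ range (j+1), (Nat.choose m i : R) * (1-t)^i * t^(m-i) = t^j := by
  intro j
  induction j with
  | zero =>
    intro hm
    simp only [Nat.choose_zero_right, Nat.cast_one, one_mul, pow_one, pow_zero,
      Nat.zero_add, Finset.sum_range_one, Nat.sub_zero]
    have := geom_sum_mul t m
    linear_combination -this
  | succ j ih =>
    intro hm
    have hj : j < m := Nat.lt_of_succ_lt hm
    have hIH := ih hj
    obtain ⟨n, rfl⟩ : ∃ n, m = n + 1 := ⟨m - 1, by omega⟩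
    have hrec := aux_rec t n j
    have hpow : t^(n+1) = t^(j+1) * t^(n+1-(j+1)) := by
      rw [← pow_add]; congr 1; omega
    rw [Finset.sum_range_succ (f := fun i => (Nat.choose (n+1) i : R) * (1-t)^i * t^(n+1-i))]
    linear_combination (1-t)^(j+1) * hrec + t * hIH
      - (Nat.choose (n+1) (j+1) : R) * (1-t)^(j+1) * hpow

/-- For an odd prime `p`, `x ∈ F_p \ {0, 4}` and `0 ≤ j < (p-1)/2`:
`∑_{i=j}^{(p-1)/2} C(i,j) (x/4)^i
  = (x/4)^j/(1 - x/4)^(j+1) · (1 - x^((p-1)/2) ∑_{i=0}^{j} C((p-1)/2, i)(4/x - 1)^i)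
    + C((p-1)/2, j) x^((p-1)/2)` in `F_p`. -/
theorem stmt19 (p : ℕ) [Fact p.Prime] (hp : p ≠ 2) (x : ZMod p)
    (hx0 : x ≠ 0) (hx4 : x ≠ 4) (j : ℕ) (hj : j < (p - 1) / 2) :
    ∑ i ∈ Finset.Icc j ((p - 1) / 2), (Nat.choose i j : ZMod p) * (x / 4) ^ i =
      (x / 4) ^ j / (1 - x / 4) ^ (j + 1) *
          (1 - x ^ ((p - 1) / 2) *
            ∑ i ∈ Finset.range (j + 1),
              (Nat.choose ((p - 1) / 2) i : ZMod p) * (4 / x - 1) ^ i) +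
        (Nat.choose ((p - 1) / 2) j : ZMod p) * x ^ ((p - 1) / 2) := by
  set m := (p - 1) / 2 with hm
  have hprime : p.Prime := Fact.out
  have h2 : (2 : ZMod p) ≠ 0 := by
    have : ((2:ℕ) : ZMod p) ≠ 0 := by
      rw [Ne, ZMod.natCast_eq_zero_iff]
      intro hdvd
      exact hp ((Nat.prime_dvd_prime_iff_eq hprime Nat.prime_two).mp hdvd)
    simpa using this
  have h4 : (4 : ZMod p) ≠ 0 := by
    have : (4 : ZMod p) = 2^2 := by norm_num
    rw [this]; exact pow_ne_zero 2 h2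
  set t := x / 4 with htdef
  have ht0 : t ≠ 0 := div_ne_zero hx0 h4
  have ht1 : 1 - t ≠ 0 := by
    intro h
    apply hx4
    have : t = 1 := by linear_combination -h
    field_simp [htdef] at this
    have h' : x / 4 = 1 := this
    rwa [div_eq_one_iff_eq h4] at h'
  have h4m : (4 : ZMod p)^m = 1 := by
    have hpodd : p % 2 = 1 := Nat.Prime.eq_one_or_self_of_dvd hprime 2 |> fun _ => by
      rcases hprime.eq_two_or_odd with h | h
      · exact absurd h hp
      · exact h
    have h2m : 2 * m = p - 1 := by omega
    have : (4 : ZMod p) = 2^2 := by norm_num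
    rw [this, ← pow_mul]
    have : 2 * m = p - 1 := h2m
    rw [show 2 * m = p - 1 from h2m]
    exact ZMod.pow_card_sub_one_eq_one h2
  have htm : t ^ m = x ^ m := by rw [htdef, div_pow, h4m, div_one]
  have hL : ∑ i ∈ Finset.Icc j m, (Nat.choose i j : ZMod p) * t ^ i
      = (∑ i ∈ range m, (Nat.choose i j : ZMod p) * t ^ i)
        + (Nat.choose m j : ZMod p) * t ^ m := by
    have hzero : ∑ i ∈ Finset.Ico 0 j, (Nat.choose i j : ZMod p) * t ^ i = 0 :=
      Finset.sum_eq_zero fun i hi => by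
        simp [Nat.choose_eq_zero_of_lt (Finset.mem_Ico.mp hi).2]
    have h1 : ∑ i ∈ range (m + 1), (Nat.choose i j : ZMod p) * t ^ i
        = ∑ i ∈ Finset.Ico 0 j, (Nat.choose i j : ZMod p) * t ^ i
          + ∑ i ∈ Finset.Ico j (m + 1), (Nat.choose i j : ZMod p) * t ^ i := by
      rw [Finset.range_eq_Ico]
      exact (Finset.sum_Ico_consecutive _ (Nat.zero_le j) (by omega)).symm
    have h2' : ∑ i ∈ Finset.Ico j (m + 1), (Nat.choose i j : ZMod p) * t ^ i
        = ∑ i ∈ range (m + 1), (Nat.choose i j : ZMod p) * t ^ i := by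
      rw [h1, hzero, zero_add]
    rw [← Finset.Ico_add_one_right_eq_Icc, h2', Finset.sum_range_succ]
  have hB : x ^ m * ∑ i ∈ range (j + 1), (Nat.choose m i : ZMod p) * (4 / x - 1) ^ i
      = ∑ i ∈ range (j + 1), (Nat.choose m i : ZMod p) * (1 - t) ^ i * t ^ (m - i) := by
    rw [Finset.mul_sum]
    refine Finset.sum_congr rfl fun i hi => ?_
    have hi' : i ≤ m := le_of_lt (lt_of_lt_of_le (Finset.mem_range.mp hi) hj)
    have hfrac : 4 / x - 1 = (1 - t) / t := by
      rw [htdef]; field_simp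
    rw [hfrac, div_pow, pow_sub₀ t ht0 hi', ← htm]
    field_simp
  have hkey := key t m j hj
  rw [hL, hB, ← htm]
  have hS : ∑ i ∈ range m, (Nat.choose i j : ZMod p) * t ^ i
      = t ^ j / (1 - t) ^ (j + 1) *
        (1 - ∑ i ∈ range (j + 1), (Nat.choose m i : ZMod p) * (1 - t) ^ i * t ^ (m - i)) := by
    rw [div_mul_eq_mul_div, eq_div_iff (pow_ne_zero _ ht1)]
    linear_combination hkey
  linear_combination hS
end
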